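/- The weight function w is nonnegative on (0, ∞) and is continuously differentiable there, with w'(r) = 0 for 0 < r ≤ r_* and w'(r) = −(2/r⁴)(r² − 4Mr + 3Q²) for r ≥ r_* (in particular the two one-sided derivatives agree and vanish at r = r_*). Moreover the function r ↦ r²·Υ(r)·w'(r) is non-increasing on (r₊, ∞). -/

import Mathlib

/-!
`w(r)` is `2Υ/r` evaluated at `max r r_*`, and `r_*`, the largest root of `r² - 4Mr + 3Q²`,
is a critical point of `2Υ/r`; so the gluing is `C¹`. Below `r_*` the function `r² Υ w'`
vanishes, and beyond it equals `-2 Υ(r) (1 - 4M/r + 3Q²/r²)`, minus twice a product of two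
nonnegative nondecreasing functions of the form `1 - b/r + c/r²`. So it is antitone on the
whole line.
-/

noncomputable section

/-- The Reissner–Nordström lapse function `Υ(r) = 1 - 2M/r + Q²/r²`. -/
def Upsilon (M Q r : ℝ) : ℝ := 1 - 2*M/r + Q^2/r^2

/-- The event horizon radius `r₊ = M + √(M² - Q²)`. -/
def rplus (M Q : ℝ) : ℝ := M + Real.sqrt (M^2 - Q^2)

/-- The radius `r_* = 2M + √(4M² - 3Q²)`. -/
def rstar (M Q : ℝ) : ℝ := 2*M + Real.sqrt (4*M^2 - 3*Q^2)

/-- The constant `w_* = (2/r_*)·Υ(r_*)`. -/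
def wstar (M Q : ℝ) : ℝ := (2 / rstar M Q) * Upsilon M Q (rstar M Q)

/-- The weight function `w`, equal to `w_*` for `r < r_*` and to `(2/r)·Υ(r)` for `r ≥ r_*`. -/
def wfun (M Q : ℝ) (r : ℝ) : ℝ :=
  if r < rstar M Q then wstar M Q else (2 / r) * Upsilon M Q r

open Set Filter Topology

section GluingAtMax

variable {E : Type*} [NormedAddCommGroup E] [NormedSpace ℝ E] {g g' : ℝ → E} {a : ℝ}

theorem hasDerivAt_comp_max_const (hg : ∀ x, a ≤ x → HasDerivAt g (g' x) x) (ha : g' a = 0)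
    (x : ℝ) : HasDerivAt (fun r => g (max r a)) (g' (max x a)) x := by
  rcases lt_trichotomy x a with hx | rfl | hx
  · rw [max_eq_right hx.le, ha]
    refine (hasDerivAt_const x (g a)).congr_of_eventuallyEq ?_
    filter_upwards [eventually_lt_nhds hx] with y hy
    rw [max_eq_right hy.le]
  · have hleft : HasDerivWithinAt (fun r => g (max r x)) 0 (Iic x) x :=
      (hasDerivWithinAt_const x _ (g x)).congr (fun y hy => by rw [max_eq_right hy]) (by simp)
    have hright : HasDerivWithinAt (fun r => g (max r x)) 0 (Ici x) x :=
      (ha ▸ (hg x le_rfl).hasDerivWithinAt).congr (fun y hy => by rw [max_eq_left hy]) (by simp)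
    rw [max_self, ha, ← hasDerivWithinAt_univ, ← Iic_union_Ici]
    exact hleft.union hright
  · rw [max_eq_left hx.le]
    refine (hg x hx.le).congr_of_eventuallyEq ?_
    filter_upwards [eventually_gt_nhds hx] with y hy
    rw [max_eq_left hy.le]

theorem contDiff_one_comp_max_const (hg : ∀ x, a ≤ x → HasDerivAt g (g' x) x) (ha : g' a = 0)
    (hg' : ContinuousOn g' (Ici a)) : ContDiff ℝ 1 (fun r => g (max r a)) := by
  have hderiv := hasDerivAt_comp_max_const hg ha
  rw [contDiff_one_iff_deriv]
  refine ⟨fun x => (hderiv x).differentiableAt, ?_⟩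
  have hderiv' : deriv (fun r => g (max r a)) = fun x => g' (max x a) :=
    funext fun x => (hderiv x).deriv
  rw [hderiv']
  exact hg'.comp_continuous (continuous_id.max continuous_const) fun x => le_max_right x a

end GluingAtMax

theorem monotoneOn_one_sub_div_add_div_sq {b c r₀ : ℝ} (hr₀ : 0 < r₀) (hc : 0 ≤ c)
    (hcb : 2 * c ≤ b * r₀) : MonotoneOn (fun r : ℝ => 1 - b / r + c / r ^ 2) (Ici r₀) := by
  intro x hx y hy hxy
  simp only [mem_Ici] at hx hy
  have hx0 : 0 < x := hr₀.trans_le hx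
  have hy0 : 0 < y := hr₀.trans_le hy
  have hvu : 1 / y ≤ 1 / x := one_div_le_one_div_of_le hx0 hxy
  have hu : 1 / x ≤ 1 / r₀ := one_div_le_one_div_of_le hr₀ hx
  have hv : 1 / y ≤ 1 / r₀ := one_div_le_one_div_of_le hr₀ hy
  have hb : c * (1 / x + 1 / y) ≤ b := by
    calc c * (1 / x + 1 / y) ≤ c * (1 / r₀ + 1 / r₀) := by gcongr
      _ = 2 * c / r₀ := by ring
      _ ≤ b := by rw [div_le_iff₀ hr₀]; exact hcb
  have key : (1 - b / y + c / y ^ 2) - (1 - b / x + c / x ^ 2)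
      = (1 / x - 1 / y) * (b - c * (1 / x + 1 / y)) := by
    field_simp
    ring
  have := mul_nonneg (sub_nonneg.mpr hvu) (sub_nonneg.mpr hb)
  linarith

theorem upsilon_nonneg {M Q r : ℝ} (hr : 0 < r) (hMr : 2 * M ≤ r) : 0 ≤ Upsilon M Q r := by
  have h2M : 2 * M / r ≤ 1 := (div_le_one hr).mpr hMr
  have hQ : 0 ≤ Q ^ 2 / r ^ 2 := by positivity
  unfold Upsilon
  linarith

section ReissnerNordstrom

variable {M Q : ℝ}

def wfunDeriv (M Q r : ℝ) : ℝ := -(2 / r ^ 4) * (r ^ 2 - 4 * M * r + 3 * Q ^ 2)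

theorem hasDerivAt_two_div_mul_upsilon {r : ℝ} (hr : r ≠ 0) :
    HasDerivAt (fun r => 2 / r * Upsilon M Q r) (wfunDeriv M Q r) r := by
  have hquot : HasDerivAt (fun r => (2 * r ^ 2 - 4 * M * r + 2 * Q ^ 2) / r ^ 3)
      (((4 * r - 4 * M) * r ^ 3 - (2 * r ^ 2 - 4 * M * r + 2 * Q ^ 2) * (3 * r ^ 2)) / (r ^ 3) ^ 2)
      r := by
    refine HasDerivAt.div ?_ (by simpa using hasDerivAt_pow 3 r) (pow_ne_zero 3 hr)
    have hsq : HasDerivAt (fun x : ℝ => x ^ 2) (2 * r) r := by simpa using hasDerivAt_pow 2 r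
    exact ((hsq.const_mul 2).sub ((hasDerivAt_id r).const_mul (4 * M))).add_const (2 * Q ^ 2)
      |>.congr_deriv (by ring)
  convert hquot using 1
  · funext x
    rcases eq_or_ne x 0 with rfl | hx
    · simp
    · unfold Upsilon
      field_simp
      ring
  · unfold wfunDeriv
    field_simp
    ring

theorem two_mul_le_rstar : 2 * M ≤ rstar M Q := by
  unfold rstar
  linarith [Real.sqrt_nonneg (4 * M ^ 2 - 3 * Q ^ 2)]

theorem rstar_sq_sub_add_eq_zero (hQ : 3 * Q ^ 2 ≤ 4 * M ^ 2) :
    rstar M Q ^ 2 - 4 * M * rstar M Q + 3 * Q ^ 2 = 0 := by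
  have := Real.sq_sqrt (sub_nonneg.mpr hQ)
  unfold rstar
  linear_combination this

theorem wfunDeriv_rstar (hQ : 3 * Q ^ 2 ≤ 4 * M ^ 2) : wfunDeriv M Q (rstar M Q) = 0 := by
  rw [wfunDeriv, rstar_sq_sub_add_eq_zero hQ, mul_zero]

theorem wfun_eq_comp_max :
    wfun M Q = fun r => 2 / max r (rstar M Q) * Upsilon M Q (max r (rstar M Q)) := by
  funext r
  unfold wfun wstar
  split_ifs with h
  · rw [max_eq_right h.le]
  · rw [max_eq_left (not_lt.mp h)]

theorem rstar_pos (hM : 0 < M) : 0 < rstar M Q := by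
  linarith [two_mul_le_rstar (M := M) (Q := Q)]

theorem one_sub_div_add_div_sq_rstar (hM : 0 < M) (hQ : 3 * Q ^ 2 ≤ 4 * M ^ 2) :
    1 - 4 * M / rstar M Q + 3 * Q ^ 2 / rstar M Q ^ 2 = 0 := by
  have := (rstar_pos (Q := Q) hM).ne'
  field_simp
  linear_combination rstar_sq_sub_add_eq_zero hQ

theorem wfun_nonneg (hM : 0 < M) (r : ℝ) : 0 ≤ wfun M Q r := by
  have hMr : 2 * M ≤ max r (rstar M Q) := two_mul_le_rstar.trans (le_max_right _ _)
  have hr : 0 < max r (rstar M Q) := (rstar_pos hM).trans_le (le_max_right _ _)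
  rw [wfun_eq_comp_max]
  exact mul_nonneg (by positivity) (upsilon_nonneg hr hMr)

theorem hasDerivAt_wfun (hM : 0 < M) (hQ : 3 * Q ^ 2 ≤ 4 * M ^ 2) (r : ℝ) :
    HasDerivAt (wfun M Q) (wfunDeriv M Q (max r (rstar M Q))) r := by
  rw [wfun_eq_comp_max]
  exact hasDerivAt_comp_max_const
    (fun x hx => hasDerivAt_two_div_mul_upsilon ((rstar_pos hM).trans_le hx).ne')
    (wfunDeriv_rstar hQ) r

theorem contDiff_wfun (hM : 0 < M) (hQ : 3 * Q ^ 2 ≤ 4 * M ^ 2) : ContDiff ℝ 1 (wfun M Q) := by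
  rw [wfun_eq_comp_max]
  refine contDiff_one_comp_max_const
    (fun x hx => hasDerivAt_two_div_mul_upsilon ((rstar_pos hM).trans_le hx).ne')
    (wfunDeriv_rstar hQ) ?_
  unfold wfunDeriv
  fun_prop (disch := exact fun x hx => pow_ne_zero 4 ((rstar_pos hM).trans_le hx).ne')

theorem sq_mul_upsilon_mul_deriv_wfun (hM : 0 < M) (hQ : 3 * Q ^ 2 ≤ 4 * M ^ 2) (r : ℝ) :
    r ^ 2 * Upsilon M Q r * deriv (wfun M Q) r
      = -2 * (Upsilon M Q (max r (rstar M Q)) * (1 - 4 * M / max r (rstar M Q)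
          + 3 * Q ^ 2 / max r (rstar M Q) ^ 2)) := by
  rw [(hasDerivAt_wfun hM hQ r).deriv]
  rcases le_total r (rstar M Q) with hr | hr
  · rw [max_eq_right hr, wfunDeriv_rstar hQ, one_sub_div_add_div_sq_rstar hM hQ]
    ring
  · have := ((rstar_pos hM).trans_le hr).ne'
    rw [max_eq_left hr, wfunDeriv]
    field_simp

theorem monotoneOn_upsilon_mul_one_sub_div_add_div_sq (hM : 0 < M)
    (hQ : 3 * Q ^ 2 ≤ 4 * M ^ 2) :
    MonotoneOn (fun r => Upsilon M Q r * (1 - 4 * M / r + 3 * Q ^ 2 / r ^ 2))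
      (Ici (rstar M Q)) := by
  have ha := rstar_pos (Q := Q) hM
  have hMa : 2 * M ≤ rstar M Q := two_mul_le_rstar
  have hP : MonotoneOn (fun r : ℝ => 1 - 4 * M / r + 3 * Q ^ 2 / r ^ 2) (Ici (rstar M Q)) :=
    monotoneOn_one_sub_div_add_div_sq ha (by positivity) (by nlinarith)
  refine (monotoneOn_one_sub_div_add_div_sq ha (sq_nonneg Q) (by nlinarith)).mul hP
    (fun r hr => upsilon_nonneg (ha.trans_le hr) (hMa.trans hr)) fun r hr => ?_
  simpa only [one_sub_div_add_div_sq_rstar hM hQ] using hP self_mem_Ici hr hr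

theorem antitone_sq_mul_upsilon_mul_deriv_wfun (hM : 0 < M) (hQ : 3 * Q ^ 2 ≤ 4 * M ^ 2) :
    Antitone fun r => r ^ 2 * Upsilon M Q r * deriv (wfun M Q) r := by
  intro x y hxy
  simp only [sq_mul_upsilon_mul_deriv_wfun hM hQ]
  have := monotoneOn_upsilon_mul_one_sub_div_add_div_sq hM hQ (le_max_right x _)
    (le_max_right y _) (max_le_max_right _ hxy)
  linarith

end ReissnerNordstrom

theorem weight_nonneg_C1_and_monotone_general (M Q : ℝ) (hQ : |Q| < M) :
    (∀ r : ℝ, 0 < r → 0 ≤ wfun M Q r) ∧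
    ContDiffOn ℝ 1 (wfun M Q) (Set.Ioi 0) ∧
    (∀ r : ℝ, 0 < r → r ≤ rstar M Q → HasDerivAt (wfun M Q) 0 r) ∧
    (∀ r : ℝ, rstar M Q ≤ r →
      HasDerivAt (wfun M Q) (-(2 / r^4) * (r^2 - 4*M*r + 3*Q^2)) r) ∧
    AntitoneOn (fun r => r^2 * Upsilon M Q r * deriv (wfun M Q) r)
      (Set.Ioi (rplus M Q)) := by
  have hM : 0 < M := (abs_nonneg Q).trans_lt hQ
  have hQM : 3 * Q ^ 2 ≤ 4 * M ^ 2 := by nlinarith [sq_abs Q, abs_nonneg Q]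
  refine ⟨fun r _ => wfun_nonneg hM r, (contDiff_wfun hM hQM).contDiffOn, fun r _ hr => ?_,
    fun r hr => ?_, (antitone_sq_mul_upsilon_mul_deriv_wfun hM hQM).antitoneOn _⟩
  · simpa only [max_eq_right hr, wfunDeriv_rstar hQM] using hasDerivAt_wfun hM hQM r
  · have := hasDerivAt_wfun hM hQM r
    rwa [max_eq_left hr] at this

theorem weight_nonneg_C1_and_monotone (M Q : ℝ) (hM : 0 < M) (hQ : |Q| < M) :
    (∀ r : ℝ, 0 < r → 0 ≤ wfun M Q r) ∧
    ContDiffOn ℝ 1 (wfun M Q) (Set.Ioi 0) ∧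
    (∀ r : ℝ, 0 < r → r ≤ rstar M Q → HasDerivAt (wfun M Q) 0 r) ∧
    (∀ r : ℝ, rstar M Q ≤ r →
      HasDerivAt (wfun M Q) (-(2 / r^4) * (r^2 - 4*M*r + 3*Q^2)) r) ∧
    AntitoneOn (fun r => r^2 * Upsilon M Q r * deriv (wfun M Q) r)
      (Set.Ioi (rplus M Q)) :=
  weight_nonneg_C1_and_monotone_general M Q hQ
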